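/- Let A, B, C be distinct concept names, R a role name, a an individual name, and K₁ = ⟨T₁, A₁⟩ with T₁ = {∃R.⊤ ⊑ A, ∃R⁻.⊤ ⊑ ¬A, ∃R.⊤ ⊑ C, C ⊑ ¬B} and A₁ = {R(a,a), B(a)}. Then: (i) the only repair and the only closed repair of K₁ is {B(a)}; hence K₁ ⊨_IAR B(a), K₁ ⊭_brave C(a), and K₁ ⊭_CAR C(a); (ii) under the four-valued semantics, K₁ ⊨₄ T(C(a)) but K₁ ⊭₄ T(B(a)) — in particular, every 4-model I of K₁ satisfies a^I ∈ C^{Ip} and a^I ∈ B^{In}, and there is a 4-model J of K₁ with a^J ∉ C^{Jn}. -/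

import Mathlib

/-!
Classically `R(a,a)` clashes with `T₁`: it makes `a` an instance of both `∃R.⊤ ⊑ A` and
`∃R⁻.⊤ ⊑ ¬A`. So `{B(a)}` is the greatest `T₁`-consistent sub-ABox, and since its Herbrand
interpretation (individuals denote themselves, no role edges) is a model of `T₁`, it entails no
assertion besides `B(a)`. This fixes the repairs, `C*`, the closed repairs and hence the IAR,
brave and CAR answers. Four-valued models may keep `R(a,a)`, which forces `a` into `C⁺` and
then into `B⁻`; the one-point model in which every atom is true and every atom but `C` is false
shows that `C(a)` is nevertheless not contradictory.
-/

namespace Para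

/-! ### Syntax -/

inductive Role (RN : Type) : Type where
  | name : RN → Role RN
  | inv  : RN → Role RN

inductive Concept (CN RN : Type) : Type where
  | top   : Concept CN RN
  | atom  : CN → Concept CN RN
  | neg   : Concept CN RN → Concept CN RN
  | tri   : Concept CN RN → Concept CN RN
  | inter : Concept CN RN → Concept CN RN → Concept CN RN
  | all   : Role RN → Concept CN RN → Concept CN RN

namespace Concept
variable {CN RN : Type}
def bot : Concept CN RN := neg top
def union (C D : Concept CN RN) : Concept CN RN := neg (inter (neg C) (neg D))
def ex (S : Role RN) (C : Concept CN RN) : Concept CN RN := neg (all S (neg C))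
end Concept

inductive DLAxiom (CN RN : Type) : Type where
  | cinc : Concept CN RN → Concept CN RN → DLAxiom CN RN
  | rinc : Role RN → Role RN → DLAxiom CN RN

inductive Assertion (CN RN IN : Type) : Type where
  | ca : CN → IN → Assertion CN RN IN
  | ra : RN → IN → IN → Assertion CN RN IN

inductive Frm (CN RN IN : Type) : Type where
  | ax : DLAxiom CN RN → Frm CN RN IN
  | assert : Assertion CN RN IN → Frm CN RN IN

/-! ### Four-valued interpretations -/

structure FourInterp (CN RN IN : Type) : Type 1 where
  Dom : Type
  dom_nonempty : Nonempty Dom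
  cpos : CN → Set Dom
  cneg : CN → Set Dom
  rext : RN → Set (Dom × Dom)
  ind : IN → Dom

variable {CN RN IN V : Type}

def FourInterp.rInterp (I : FourInterp CN RN IN) : Role RN → Set (I.Dom × I.Dom)
  | .name R => I.rext R
  | .inv R  => {p | (p.2, p.1) ∈ I.rext R}

/-- Positive and negative extensions of a concept, as a pair. -/
def FourInterp.ext (I : FourInterp CN RN IN) : Concept CN RN → Set I.Dom × Set I.Dom
  | .top => (Set.univ, ∅)
  | .atom A => (I.cpos A, I.cneg A)
  | .neg C => ((I.ext C).2, (I.ext C).1)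
  | .tri C => ((I.ext C).1, ((I.ext C).1)ᶜ)
  | .inter C D => ((I.ext C).1 ∩ (I.ext D).1, (I.ext C).2 ∪ (I.ext D).2)
  | .all S C => ({x | ∀ y, (x, y) ∈ I.rInterp S → y ∈ (I.ext C).1},
                 {x | ∃ y, (x, y) ∈ I.rInterp S ∧ y ∈ (I.ext C).2})

def FourInterp.pExt (I : FourInterp CN RN IN) (C : Concept CN RN) : Set I.Dom := (I.ext C).1
def FourInterp.nExt (I : FourInterp CN RN IN) (C : Concept CN RN) : Set I.Dom := (I.ext C).2

def FourInterp.satAx (I : FourInterp CN RN IN) : DLAxiom CN RN → Prop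
  | .cinc C D => I.pExt C ⊆ I.pExt D
  | .rinc S S' => I.rInterp S ⊆ I.rInterp S'

def FourInterp.satAssert (I : FourInterp CN RN IN) : Assertion CN RN IN → Prop
  | .ca A a => I.ind a ∈ I.cpos A
  | .ra R a b => (I.ind a, I.ind b) ∈ I.rext R

def FourInterp.satFrm (I : FourInterp CN RN IN) : Frm CN RN IN → Prop
  | .ax ax => I.satAx ax
  | .assert α => I.satAssert α

/-! ### Classical interpretations -/

structure ClassInterp (CN RN IN : Type) : Type 1 where
  Dom : Type
  dom_nonempty : Nonempty Dom
  cext : CN → Set Dom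
  rext : RN → Set (Dom × Dom)
  ind : IN → Dom

def ClassInterp.rInterp (J : ClassInterp CN RN IN) : Role RN → Set (J.Dom × J.Dom)
  | .name R => J.rext R
  | .inv R  => {p | (p.2, p.1) ∈ J.rext R}

def ClassInterp.ext (J : ClassInterp CN RN IN) : Concept CN RN → Set J.Dom
  | .top => Set.univ
  | .atom A => J.cext A
  | .neg C => (J.ext C)ᶜ
  | .tri C => J.ext C
  | .inter C D => J.ext C ∩ J.ext D
  | .all S C => {x | ∀ y, (x, y) ∈ J.rInterp S → y ∈ J.ext C}

def ClassInterp.satAx (J : ClassInterp CN RN IN) : DLAxiom CN RN → Prop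
  | .cinc C D => J.ext C ⊆ J.ext D
  | .rinc S S' => J.rInterp S ⊆ J.rInterp S'

def ClassInterp.satAssert (J : ClassInterp CN RN IN) : Assertion CN RN IN → Prop
  | .ca A a => J.ind a ∈ J.cext A
  | .ra R a b => (J.ind a, J.ind b) ∈ J.rext R

def ClassInterp.satFrm (J : ClassInterp CN RN IN) : Frm CN RN IN → Prop
  | .ax ax => J.satAx ax
  | .assert α => J.satAssert α

/-! ### Knowledge bases -/

structure KB (CN RN IN : Type) : Type where
  tbox : Set (DLAxiom CN RN)
  abox : Set (Assertion CN RN IN)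
  tbox_finite : tbox.Finite
  abox_finite : abox.Finite

def FourInterp.satKB (I : FourInterp CN RN IN) (K : KB CN RN IN) : Prop :=
  (∀ ax ∈ K.tbox, I.satAx ax) ∧ (∀ α ∈ K.abox, I.satAssert α)

def ClassInterp.satKB (J : ClassInterp CN RN IN) (K : KB CN RN IN) : Prop :=
  (∀ ax ∈ K.tbox, J.satAx ax) ∧ (∀ α ∈ K.abox, J.satAssert α)

def fourEntailsFrm (K : KB CN RN IN) (φ : Frm CN RN IN) : Prop :=
  ∀ I : FourInterp CN RN IN, I.satKB K → I.satFrm φ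

def clEntailsFrm (K : KB CN RN IN) (φ : Frm CN RN IN) : Prop :=
  ∀ J : ClassInterp CN RN IN, J.satKB K → J.satFrm φ


/-! ### Negation normal form -/

inductive IsNNF {CN RN : Type} : Concept CN RN → Prop where
  | top : IsNNF Concept.top
  | bot : IsNNF Concept.bot
  | atom (A : CN) : IsNNF (Concept.atom A)
  | negAtom (A : CN) : IsNNF (Concept.neg (Concept.atom A))
  | triAtom (A : CN) : IsNNF (Concept.tri (Concept.atom A))
  | triNegAtom (A : CN) : IsNNF (Concept.tri (Concept.neg (Concept.atom A)))
  | negTriAtom (A : CN) : IsNNF (Concept.neg (Concept.tri (Concept.atom A)))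
  | negTriNegAtom (A : CN) : IsNNF (Concept.neg (Concept.tri (Concept.neg (Concept.atom A))))
  | inter {C D : Concept CN RN} : IsNNF C → IsNNF D → IsNNF (Concept.inter C D)
  | union {C D : Concept CN RN} : IsNNF C → IsNNF D → IsNNF (Concept.union C D)
  | all {C : Concept CN RN} (S : Role RN) : IsNNF C → IsNNF (Concept.all S C)
  | ex {C : Concept CN RN} (S : Role RN) : IsNNF C → IsNNF (Concept.ex S C)

def AxInNNF : DLAxiom CN RN → Prop
  | .cinc C D => IsNNF C ∧ IsNNF D
  | .rinc _ _ => True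

def FrmInNNF : Frm CN RN IN → Prop
  | .ax ax => AxInNNF ax
  | .assert _ => True

def KBInNNF (K : KB CN RN IN) : Prop := ∀ ax ∈ K.tbox, AxInNNF ax

/-! ### Classical counterpart translation (for concepts in NNF) -/

def clConcept {CN RN : Type} : Concept CN RN → Concept (CN ⊕ CN) RN
  | .atom A => .atom (.inl A)
  | .neg (.atom A) => .atom (.inr A)
  | .tri (.atom A) => .atom (.inl A)
  | .tri (.neg (.atom A)) => .atom (.inr A)
  | .neg (.tri (.atom A)) => .neg (.atom (.inl A))
  | .neg (.tri (.neg (.atom A))) => .neg (.atom (.inr A))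
  | .top => .top
  | .neg .top => .neg .top
  | .neg (.inter (.neg C) (.neg D)) => Concept.union (clConcept C) (clConcept D)
  | .neg (.all S (.neg C)) => Concept.ex S (clConcept C)
  | .inter C D => .inter (clConcept C) (clConcept D)
  | .all S C => .all S (clConcept C)
  | _ => .top

def clAxiom : DLAxiom CN RN → DLAxiom (CN ⊕ CN) RN
  | .cinc C D => .cinc (clConcept C) (clConcept D)
  | .rinc S S' => .rinc S S'

def clAssertion : Assertion CN RN IN → Assertion (CN ⊕ CN) RN IN
  | .ca A a => .ca (.inl A) a
  | .ra R a b => .ra R a b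

def clFrm : Frm CN RN IN → Frm (CN ⊕ CN) RN IN
  | .ax ax => .ax (clAxiom ax)
  | .assert α => .assert (clAssertion α)

def clKB (K : KB CN RN IN) : KB (CN ⊕ CN) RN IN where
  tbox := clAxiom '' K.tbox
  abox := clAssertion '' K.abox
  tbox_finite := K.tbox_finite.image _
  abox_finite := K.abox_finite.image _

/-- The classical counterpart `I^cl` of a 4-interpretation. -/
def FourInterp.toClassical (I : FourInterp CN RN IN) : ClassInterp (CN ⊕ CN) RN IN where
  Dom := I.Dom
  dom_nonempty := I.dom_nonempty
  cext := Sum.elim I.cpos I.cneg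
  rext := I.rext
  ind := I.ind

/-- The 4-counterpart of a classical interpretation over names `A⁺, A⁻`. -/
def ClassInterp.toFour (J : ClassInterp (CN ⊕ CN) RN IN) : FourInterp CN RN IN where
  Dom := J.Dom
  dom_nonempty := J.dom_nonempty
  cpos := fun A => J.cext (.inl A)
  cneg := fun A => J.cext (.inr A)
  rext := J.rext
  ind := J.ind

/-! ### The △-prefixing translation -/

def triConcept : Concept CN RN → Concept CN RN
  | .top => .top
  | .atom A => .tri (.atom A)
  | .neg C => .neg (triConcept C)
  | .tri C => .tri (triConcept C)
  | .inter C D => .inter (triConcept C) (triConcept D)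
  | .all S C => .all S (triConcept C)

def TriFree : Concept CN RN → Prop
  | .top => True
  | .atom _ => True
  | .neg C => TriFree C
  | .tri _ => False
  | .inter C D => TriFree C ∧ TriFree D
  | .all _ C => TriFree C

def AxTriFree : DLAxiom CN RN → Prop
  | .cinc C D => TriFree C ∧ TriFree D
  | .rinc _ _ => True

def FrmTriFree : Frm CN RN IN → Prop
  | .ax ax => AxTriFree ax
  | .assert _ => True

def KBTriFree (K : KB CN RN IN) : Prop := ∀ ax ∈ K.tbox, AxTriFree ax

def triAxiom : DLAxiom CN RN → DLAxiom CN RN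
  | .cinc C D => .cinc (triConcept C) (triConcept D)
  | .rinc S S' => .rinc S S'

def triFrm : Frm CN RN IN → Frm CN RN IN
  | .ax ax => .ax (triAxiom ax)
  | .assert α => .assert α

def triKB (K : KB CN RN IN) : KB CN RN IN where
  tbox := triAxiom '' K.tbox
  abox := K.abox
  tbox_finite := K.tbox_finite.image _
  abox_finite := K.abox_finite

/-! ### Removing △ -/

def flatConcept : Concept CN RN → Concept CN RN
  | .top => .top
  | .atom A => .atom A
  | .neg C => .neg (flatConcept C)
  | .tri C => flatConcept C
  | .inter C D => .inter (flatConcept C) (flatConcept D)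
  | .all S C => .all S (flatConcept C)

def flatAxiom : DLAxiom CN RN → DLAxiom CN RN
  | .cinc C D => .cinc (flatConcept C) (flatConcept D)
  | .rinc S S' => .rinc S S'

def flatKB (K : KB CN RN IN) : KB CN RN IN where
  tbox := flatAxiom '' K.tbox
  abox := K.abox
  tbox_finite := K.tbox_finite.image _
  abox_finite := K.abox_finite

/-! ### ELHI_¬ knowledge bases -/

def AtomTop (C : Concept CN RN) : Prop := C = Concept.top ∨ ∃ A, C = Concept.atom A

def AtomTopBot (C : Concept CN RN) : Prop :=
  C = Concept.top ∨ C = Concept.bot ∨ ∃ A, C = Concept.atom A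

def IsELHInegAxiom : DLAxiom CN RN → Prop
  | .rinc _ _ => True
  | .cinc L M =>
      (AtomTop L ∧ ∃ S B, AtomTop B ∧ M = Concept.ex S B) ∨
      ((∃ S A, AtomTop A ∧ L = Concept.ex S A) ∧ AtomTopBot M) ∨
      ((∃ A B, AtomTop A ∧ AtomTop B ∧ L = Concept.inter A B) ∧ AtomTopBot M) ∨
      (AtomTop L ∧ ∃ B, AtomTop B ∧ M = Concept.neg B)

def IsELHInegKB (K : KB CN RN IN) : Prop := ∀ ax ∈ K.tbox, IsELHInegAxiom ax

/-- `K⁺`: drop all concept inclusions of the weak-disjointness form `A ⊑ ¬B`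
(`B` a concept name; note that in `ELHI_¬` the derived constructors `∃S.B` and
`⊥` are not of this form). -/
def KPlus (K : KB CN RN IN) : KB CN RN IN where
  tbox := {ax ∈ K.tbox |
    ∀ (L : Concept CN RN) (B : CN), ax ≠ DLAxiom.cinc L (Concept.neg (Concept.atom B))}
  abox := K.abox
  tbox_finite := K.tbox_finite.subset (Set.sep_subset _ _)
  abox_finite := K.abox_finite

/-! ### Conjunctive queries -/

inductive Term (V IN : Type) : Type where
  | var : V → Term V IN
  | ind : IN → Term V IN

structure CQ (CN RN IN V : Type) : Type where
  roleAtoms : Set (RN × Term V IN × Term V IN)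
  concAtoms : Set (CN × Term V IN)
  roleAtoms_finite : roleAtoms.Finite
  concAtoms_finite : concAtoms.Finite

def FourInterp.cqMatch (I : FourInterp CN RN IN) (q : CQ CN RN IN V)
    (π : Term V IN → I.Dom) : Prop :=
  (∀ c : IN, π (Term.ind c) = I.ind c) ∧
  (∀ p ∈ q.roleAtoms, (π p.2.1, π p.2.2) ∈ I.rext p.1) ∧
  (∀ p ∈ q.concAtoms, π p.2 ∈ I.cpos p.1)

def ClassInterp.cqMatch (J : ClassInterp CN RN IN) (q : CQ CN RN IN V)
    (π : Term V IN → J.Dom) : Prop :=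
  (∀ c : IN, π (Term.ind c) = J.ind c) ∧
  (∀ p ∈ q.roleAtoms, (π p.2.1, π p.2.2) ∈ J.rext p.1) ∧
  (∀ p ∈ q.concAtoms, π p.2 ∈ J.cext p.1)

def fourEntailsCQ (K : KB CN RN IN) (q : CQ CN RN IN V) : Prop :=
  ∀ I : FourInterp CN RN IN, I.satKB K → ∃ π, I.cqMatch q π

def clEntailsCQ (K : KB CN RN IN) (q : CQ CN RN IN V) : Prop :=
  ∀ J : ClassInterp CN RN IN, J.satKB K → ∃ π, J.cqMatch q π

/-! ### Conjunctive queries with values -/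

inductive TVal : Type where
  | T | B | N | F

structure CQV (CN RN IN V : Type) : Type where
  roleAtoms : Set (RN × Term V IN × Term V IN)
  concAtoms : Set (CN × Term V IN)
  valAtoms : Set (TVal × CN × Term V IN)
  roleAtoms_finite : roleAtoms.Finite
  concAtoms_finite : concAtoms.Finite
  valAtoms_finite : valAtoms.Finite

namespace CQV

def atV (q : CQV CN RN IN V) (X : TVal) : Set (CN × Term V IN) :=
  {p | (X, p.1, p.2) ∈ q.valAtoms}

theorem atV_finite (q : CQV CN RN IN V) (X : TVal) : (q.atV X).Finite := by
  have h : q.atV X ⊆ (fun w : TVal × CN × Term V IN => (w.2.1, w.2.2)) '' q.valAtoms := by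
    rintro ⟨A, t⟩ h
    exact ⟨(X, A, t), h, rfl⟩
  exact (q.valAtoms_finite.image _).subset h

def atPlus (q : CQV CN RN IN V) : Set (CN × Term V IN) :=
  q.concAtoms ∪ q.atV TVal.T ∪ q.atV TVal.B

def atBF (q : CQV CN RN IN V) : Set (CN × Term V IN) := q.atV TVal.B ∪ q.atV TVal.F
def atTN (q : CQV CN RN IN V) : Set (CN × Term V IN) := q.atV TVal.T ∪ q.atV TVal.N
def atFN (q : CQV CN RN IN V) : Set (CN × Term V IN) := q.atV TVal.F ∪ q.atV TVal.N

theorem atPlus_finite (q : CQV CN RN IN V) : q.atPlus.Finite :=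
  (q.concAtoms_finite.union (q.atV_finite TVal.T)).union (q.atV_finite TVal.B)

theorem atBF_finite (q : CQV CN RN IN V) : q.atBF.Finite :=
  (q.atV_finite TVal.B).union (q.atV_finite TVal.F)

end CQV

/-- Item 1 of the definition of answers: the match required in every 4-model. -/
def FourInterp.cqvMatch1 (I : FourInterp CN RN IN) (q : CQV CN RN IN V)
    (π : Term V IN → I.Dom) : Prop :=
  (∀ c : IN, π (Term.ind c) = I.ind c) ∧
  (∀ p ∈ q.roleAtoms, (π p.2.1, π p.2.2) ∈ I.rext p.1) ∧
  (∀ p ∈ q.atPlus, π p.2 ∈ I.cpos p.1) ∧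
  (∀ p ∈ q.atBF, π p.2 ∈ I.cneg p.1)

/-- Item 2: the extra conditions required of a match in some 4-model. -/
def FourInterp.cqvMatch2 (I : FourInterp CN RN IN) (q : CQV CN RN IN V)
    (π : Term V IN → I.Dom) : Prop :=
  (∀ p ∈ q.atTN, π p.2 ∉ I.cneg p.1) ∧
  (∀ p ∈ q.atFN, π p.2 ∉ I.cpos p.1)

def fourEntailsCQV (K : KB CN RN IN) (q : CQV CN RN IN V) : Prop :=
  (∀ I : FourInterp CN RN IN, I.satKB K → ∃ π, I.cqvMatch1 q π) ∧
  (∃ I : FourInterp CN RN IN, I.satKB K ∧ ∃ π, I.cqvMatch1 q π ∧ I.cqvMatch2 q π)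


/-! ### The flattened query `q^♭` (T ↦ positive atom, F ↦ negated atom) -/

def ClassInterp.flatMatch (J : ClassInterp CN RN IN) (q : CQV CN RN IN V)
    (π : Term V IN → J.Dom) : Prop :=
  (∀ c : IN, π (Term.ind c) = J.ind c) ∧
  (∀ p ∈ q.roleAtoms, (π p.2.1, π p.2.2) ∈ J.rext p.1) ∧
  (∀ p ∈ q.concAtoms ∪ q.atV TVal.T, π p.2 ∈ J.cext p.1) ∧
  (∀ p ∈ q.atV TVal.F, π p.2 ∉ J.cext p.1)

def clEntailsFlat (K : KB CN RN IN) (q : CQV CN RN IN V) : Prop :=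
  ∀ J : ClassInterp CN RN IN, J.satKB K → ∃ π, J.flatMatch q π

/-! ### Reduction to classical query answering (Theorem queryreduction ingredients) -/

/-- `c_t`: the fresh individual name associated to a term. -/
def Term.toInd : Term V IN → IN ⊕ V
  | .ind c => Sum.inl c
  | .var x => Sum.inr x

/-- `q⁺`, a conjunctive query over the names `A⁺ = inl A`, `A⁻ = inr A`. -/
def qPlus (q : CQV CN RN IN V) : CQ (CN ⊕ CN) RN IN V where
  roleAtoms := q.roleAtoms
  concAtoms := (fun p : CN × Term V IN => ((Sum.inl p.1 : CN ⊕ CN), p.2)) '' q.atPlus ∪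
               (fun p : CN × Term V IN => ((Sum.inr p.1 : CN ⊕ CN), p.2)) '' q.atBF
  roleAtoms_finite := q.roleAtoms_finite
  concAtoms_finite := (q.atPlus_finite.image _).union (q.atBF_finite.image _)

/-- The ABox `A_q` freezing the query `q⁺`, over individual names `IN ⊕ V`. -/
def aboxQ (q : CQV CN RN IN V) : Set (Assertion (CN ⊕ CN) RN (IN ⊕ V)) :=
  (fun p : RN × Term V IN × Term V IN =>
      Assertion.ra p.1 p.2.1.toInd p.2.2.toInd) '' (qPlus q).roleAtoms ∪
  (fun p : (CN ⊕ CN) × Term V IN =>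
      Assertion.ca p.1 p.2.toInd) '' (qPlus q).concAtoms

theorem aboxQ_finite (q : CQV CN RN IN V) : (aboxQ q).Finite :=
  ((qPlus q).roleAtoms_finite.image _).union ((qPlus q).concAtoms_finite.image _)

/-- The ground atoms of the disjunction `q_ctr`. -/
def ctrAtoms (q : CQV CN RN IN V) : Set ((CN ⊕ CN) × (IN ⊕ V)) :=
  (fun p : CN × Term V IN => ((Sum.inr p.1 : CN ⊕ CN), p.2.toInd)) '' q.atTN ∪
  (fun p : CN × Term V IN => ((Sum.inl p.1 : CN ⊕ CN), p.2.toInd)) '' q.atFN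

/-- Classical entailment of a disjunction of ground concept atoms. -/
def clEntailsDisj {CN' IN' : Type} (K : KB CN' RN IN') (G : Set (CN' × IN')) : Prop :=
  ∀ J : ClassInterp CN' RN IN', J.satKB K → ∃ g ∈ G, J.ind g.2 ∈ J.cext g.1

/-- Re-index the individual names of an assertion along `Sum.inl`. -/
def Assertion.extendInd : Assertion CN RN IN → Assertion CN RN (IN ⊕ V)
  | .ca A a => .ca A (Sum.inl a)
  | .ra R a b => .ra R (Sum.inl a) (Sum.inl b)

/-- Re-index a KB to the enlarged set of individual names `IN ⊕ V`,
and add a further finite ABox. -/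
def KB.extendWith (K : KB CN RN IN) (A2 : Set (Assertion CN RN (IN ⊕ V)))
    (h : A2.Finite) : KB CN RN (IN ⊕ V) where
  tbox := K.tbox
  abox := (Assertion.extendInd '' K.abox) ∪ A2
  tbox_finite := K.tbox_finite
  abox_finite := (K.abox_finite.image _).union h

/-! ### Repair-based semantics -/

def clConsistentS (T : Set (DLAxiom CN RN)) (A : Set (Assertion CN RN IN)) : Prop :=
  ∃ J : ClassInterp CN RN IN, (∀ ax ∈ T, J.satAx ax) ∧ (∀ α ∈ A, J.satAssert α)

def clEntailsAssertS (T : Set (DLAxiom CN RN)) (A : Set (Assertion CN RN IN))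
    (φ : Assertion CN RN IN) : Prop :=
  ∀ J : ClassInterp CN RN IN,
    ((∀ ax ∈ T, J.satAx ax) ∧ (∀ α ∈ A, J.satAssert α)) → J.satAssert φ

def clEntailsCQS (T : Set (DLAxiom CN RN)) (A : Set (Assertion CN RN IN))
    (q : CQ CN RN IN V) : Prop :=
  ∀ J : ClassInterp CN RN IN,
    ((∀ ax ∈ T, J.satAx ax) ∧ (∀ α ∈ A, J.satAssert α)) → ∃ π, J.cqMatch q π

/-- A repair: an inclusion-maximal subset of the ABox consistent with the TBox. -/
def IsRepair (K : KB CN RN IN) (A' : Set (Assertion CN RN IN)) : Prop :=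
  A' ⊆ K.abox ∧ clConsistentS K.tbox A' ∧
  ∀ A'' : Set (Assertion CN RN IN),
    A' ⊆ A'' → A'' ⊆ K.abox → clConsistentS K.tbox A'' → A'' = A'

/-- The closure `C*_T(A)`. -/
def Cstar (K : KB CN RN IN) : Set (Assertion CN RN IN) :=
  {φ | ∃ A', A' ⊆ K.abox ∧ clConsistentS K.tbox A' ∧ clEntailsAssertS K.tbox A' φ}

/-- Closed repairs. -/
def IsClosedRepair (K : KB CN RN IN) (Rp : Set (Assertion CN RN IN)) : Prop :=
  Rp ⊆ Cstar K ∧ clConsistentS K.tbox Rp ∧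
  ∀ Rp' : Set (Assertion CN RN IN), Rp' ⊆ Cstar K → clConsistentS K.tbox Rp' →
    ¬(Rp ∩ K.abox ⊂ Rp' ∩ K.abox) ∧ ¬(Rp ∩ K.abox = Rp' ∩ K.abox ∧ Rp ⊂ Rp')

def braveEntailsAssert (K : KB CN RN IN) (φ : Assertion CN RN IN) : Prop :=
  ∃ A', IsRepair K A' ∧ clEntailsAssertS K.tbox A' φ

def iarEntailsAssert (K : KB CN RN IN) (φ : Assertion CN RN IN) : Prop :=
  clEntailsAssertS K.tbox (⋂₀ {A' | IsRepair K A'}) φ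

def carEntailsAssert (K : KB CN RN IN) (φ : Assertion CN RN IN) : Prop :=
  ∀ Rp, IsClosedRepair K Rp → clEntailsAssertS K.tbox Rp φ

/-- `K ⊨₄ T(A(a))`: `A(a)` is exactly-true entailed. -/
def fourEntailsT (K : KB CN RN IN) (A : CN) (a : IN) : Prop :=
  (∀ I : FourInterp CN RN IN, I.satKB K → I.ind a ∈ I.cpos A) ∧
  (∃ I : FourInterp CN RN IN, I.satKB K ∧ I.ind a ∈ I.cpos A ∧ I.ind a ∉ I.cneg A)

/-! ### The chase for ELHI_¬ -/

/-- Chase elements: individual names plus fresh successors created by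
existential axioms. -/
inductive CE (CN RN IN : Type) : Type where
  | base : IN → CE CN RN IN
  | step : CE CN RN IN → DLAxiom CN RN → CE CN RN IN

mutual
/-- `ChaseC K A d`: the chase of `K` puts element `d` in concept name `A`. -/
inductive ChaseC : KB CN RN IN → CN → CE CN RN IN → Prop where
  | abox {K : KB CN RN IN} {A a} :
      Assertion.ca A a ∈ K.abox → ChaseC K A (.base a)
  | inter {K : KB CN RN IN} {L₁ L₂ : Concept CN RN} {B d} :
      DLAxiom.cinc (Concept.inter L₁ L₂) (Concept.atom B) ∈ K.tbox →
      (∀ A, L₁ = Concept.atom A → ChaseC K A d) →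
      (∀ A, L₂ = Concept.atom A → ChaseC K A d) →
      ChaseC K B d
  | exlName {K : KB CN RN IN} {R : RN} {L : Concept CN RN} {B d e} :
      DLAxiom.cinc (Concept.ex (Role.name R) L) (Concept.atom B) ∈ K.tbox →
      ChaseR K R d e → (∀ A, L = Concept.atom A → ChaseC K A e) →
      ChaseC K B d
  | exlInv {K : KB CN RN IN} {R : RN} {L : Concept CN RN} {B d e} :
      DLAxiom.cinc (Concept.ex (Role.inv R) L) (Concept.atom B) ∈ K.tbox →
      ChaseR K R e d → (∀ A, L = Concept.atom A → ChaseC K A e) →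
      ChaseC K B d
  | exrFill {K : KB CN RN IN} {L : Concept CN RN} {S : Role RN} {B d} :
      DLAxiom.cinc L (Concept.ex S (Concept.atom B)) ∈ K.tbox →
      (∀ A, L = Concept.atom A → ChaseC K A d) →
      ChaseC K B (.step d (DLAxiom.cinc L (Concept.ex S (Concept.atom B))))

/-- `ChaseR K R d e`: the chase of `K` puts the pair `(d,e)` in role name `R`. -/
inductive ChaseR : KB CN RN IN → RN → CE CN RN IN → CE CN RN IN → Prop where
  | abox {K : KB CN RN IN} {R a b} :
      Assertion.ra R a b ∈ K.abox → ChaseR K R (.base a) (.base b)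
  | rincNN {K : KB CN RN IN} {R₁ R₂ d e} :
      DLAxiom.rinc (Role.name R₁) (Role.name R₂) ∈ K.tbox →
      ChaseR K R₁ d e → ChaseR K R₂ d e
  | rincNI {K : KB CN RN IN} {R₁ R₂ d e} :
      DLAxiom.rinc (Role.name R₁) (Role.inv R₂) ∈ K.tbox →
      ChaseR K R₁ d e → ChaseR K R₂ e d
  | rincIN {K : KB CN RN IN} {R₁ R₂ d e} :
      DLAxiom.rinc (Role.inv R₁) (Role.name R₂) ∈ K.tbox →
      ChaseR K R₁ e d → ChaseR K R₂ d e
  | rincII {K : KB CN RN IN} {R₁ R₂ d e} :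
      DLAxiom.rinc (Role.inv R₁) (Role.inv R₂) ∈ K.tbox →
      ChaseR K R₁ e d → ChaseR K R₂ e d
  | exrEdgeName {K : KB CN RN IN} {L Bc : Concept CN RN} {R : RN} {d} :
      DLAxiom.cinc L (Concept.ex (Role.name R) Bc) ∈ K.tbox →
      (∀ A, L = Concept.atom A → ChaseC K A d) →
      ChaseR K R d (.step d (DLAxiom.cinc L (Concept.ex (Role.name R) Bc)))
  | exrEdgeInv {K : KB CN RN IN} {L Bc : Concept CN RN} {R : RN} {d} :
      DLAxiom.cinc L (Concept.ex (Role.inv R) Bc) ∈ K.tbox →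
      (∀ A, L = Concept.atom A → ChaseC K A d) →
      ChaseR K R (.step d (DLAxiom.cinc L (Concept.ex (Role.inv R) Bc))) d
end

/-- The example KB `K₁` with
`T₁ = {∃R.⊤ ⊑ A, ∃R⁻.⊤ ⊑ ¬A, ∃R.⊤ ⊑ C, C ⊑ ¬B}` and `A₁ = {R(a,a), B(a)}`. -/
def exKB17 (CN RN IN : Type) (A B C : CN) (R : RN) (a : IN) : KB CN RN IN where
  tbox := {DLAxiom.cinc (Concept.ex (Role.name R) Concept.top) (Concept.atom A),
           DLAxiom.cinc (Concept.ex (Role.inv R) Concept.top) (Concept.neg (Concept.atom A)),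
           DLAxiom.cinc (Concept.ex (Role.name R) Concept.top) (Concept.atom C),
           DLAxiom.cinc (Concept.atom C) (Concept.neg (Concept.atom B))}
  abox := {Assertion.ra R a a, Assertion.ca B a}
  tbox_finite := by
    repeat apply Set.Finite.insert
    exact Set.finite_singleton _
  abox_finite := (Set.finite_singleton _).insert _

theorem ClassInterp.ext_ex {CN RN IN : Type} (J : ClassInterp CN RN IN) (S : Role RN)
    (D : Concept CN RN) :
    J.ext (Concept.ex S D) = {x | ∃ y, (x, y) ∈ J.rInterp S ∧ y ∈ J.ext D} := by
  ext x
  simp [Concept.ex, ClassInterp.ext]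

section Repairs

variable {CN RN IN : Type}

theorem clEntailsAssertS.mono {T : Set (DLAxiom CN RN)} {A₁ A₂ : Set (Assertion CN RN IN)}
    {φ : Assertion CN RN IN} (hA : A₁ ⊆ A₂) (h : clEntailsAssertS T A₁ φ) :
    clEntailsAssertS T A₂ φ :=
  fun J hJ => h J ⟨hJ.1, fun α hα => hJ.2 α (hA hα)⟩

variable {K : KB CN RN IN} {A₀ : Set (Assertion CN RN IN)}

theorem isRepair_iff_eq_of_isGreatest
    (h : IsGreatest {A' | A' ⊆ K.abox ∧ clConsistentS K.tbox A'} A₀)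
    (A' : Set (Assertion CN RN IN)) : IsRepair K A' ↔ A' = A₀ := by
  constructor
  · rintro ⟨hsub, hcon, hmax⟩
    exact (hmax A₀ (h.2 ⟨hsub, hcon⟩) h.1.1 h.1.2).symm
  · rintro rfl
    exact ⟨h.1.1, h.1.2, fun A'' hle hsub hcon => le_antisymm (h.2 ⟨hsub, hcon⟩) hle⟩

theorem cstar_eq_of_isGreatest
    (h : IsGreatest {A' | A' ⊆ K.abox ∧ clConsistentS K.tbox A'} A₀)
    (hclosed : ∀ φ, clEntailsAssertS K.tbox A₀ φ → φ ∈ A₀) : Cstar K = A₀ := by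
  apply le_antisymm
  · rintro φ ⟨A', hsub, hcon, hφ⟩
    exact hclosed φ (hφ.mono (h.2 ⟨hsub, hcon⟩))
  · exact fun φ hφ => ⟨A₀, h.1.1, h.1.2, fun J hJ => hJ.2 φ hφ⟩

theorem isClosedRepair_iff_eq_of_cstar_eq (hsub : A₀ ⊆ K.abox)
    (hcon : clConsistentS K.tbox A₀) (hC : Cstar K = A₀) (Rp : Set (Assertion CN RN IN)) :
    IsClosedRepair K Rp ↔ Rp = A₀ := by
  have inter_abox : ∀ {X}, X ⊆ A₀ → X ∩ K.abox = X := fun hX =>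
    Set.inter_eq_left.2 (hX.trans hsub)
  rw [IsClosedRepair, hC]
  constructor
  · rintro ⟨hRp, -, hmax⟩
    refine hRp.eq_of_not_ssubset fun hlt => (hmax A₀ le_rfl hcon).1 ?_
    rwa [inter_abox hRp, inter_abox le_rfl]
  · rintro rfl
    refine ⟨le_rfl, hcon, fun Rp' hRp' _ => ⟨fun hlt => ?_, fun ⟨_, hlt⟩ => hlt.2 hRp'⟩⟩
    rw [inter_abox hRp', inter_abox le_rfl] at hlt
    exact hlt.2 hRp'

theorem iarEntailsAssert_iff_of_isRepair_iff (h : ∀ A', IsRepair K A' ↔ A' = A₀)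
    (φ : Assertion CN RN IN) : iarEntailsAssert K φ ↔ clEntailsAssertS K.tbox A₀ φ := by
  have hrep : {A' | IsRepair K A'} = {A₀} := Set.ext h
  rw [iarEntailsAssert, hrep, Set.sInter_singleton]

theorem braveEntailsAssert_iff_of_isRepair_iff (h : ∀ A', IsRepair K A' ↔ A' = A₀)
    (φ : Assertion CN RN IN) : braveEntailsAssert K φ ↔ clEntailsAssertS K.tbox A₀ φ := by
  simp only [braveEntailsAssert, h, exists_eq_left]

theorem carEntailsAssert_iff_of_isClosedRepair_iff (h : ∀ Rp, IsClosedRepair K Rp ↔ Rp = A₀)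
    (φ : Assertion CN RN IN) : carEntailsAssert K φ ↔ clEntailsAssertS K.tbox A₀ φ := by
  simp only [carEntailsAssert, h, forall_eq]

end Repairs

section Herbrand

variable {CN RN IN : Type} [Nonempty IN]

def ClassInterp.ofABox (Ab : Set (Assertion CN RN IN)) : ClassInterp CN RN IN where
  Dom := IN
  dom_nonempty := inferInstance
  cext X := {b | Assertion.ca X b ∈ Ab}
  rext R := {p | Assertion.ra R p.1 p.2 ∈ Ab}
  ind := id

theorem ClassInterp.satAssert_ofABox_iff (Ab : Set (Assertion CN RN IN))
    (φ : Assertion CN RN IN) : (ClassInterp.ofABox Ab).satAssert φ ↔ φ ∈ Ab := by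
  cases φ <;> rfl

variable {T : Set (DLAxiom CN RN)} {Ab : Set (Assertion CN RN IN)}

theorem clConsistentS_of_ofABox (hT : ∀ ax ∈ T, (ClassInterp.ofABox Ab).satAx ax) :
    clConsistentS T Ab :=
  ⟨_, hT, fun α => (ClassInterp.satAssert_ofABox_iff Ab α).2⟩

theorem clEntailsAssertS_iff_mem_of_ofABox (hT : ∀ ax ∈ T, (ClassInterp.ofABox Ab).satAx ax)
    (φ : Assertion CN RN IN) : clEntailsAssertS T Ab φ ↔ φ ∈ Ab :=
  ⟨fun h => (ClassInterp.satAssert_ofABox_iff Ab φ).1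
      (h _ ⟨hT, fun α => (ClassInterp.satAssert_ofABox_iff Ab α).2⟩),
    fun hφ _ hJ => hJ.2 φ hφ⟩

end Herbrand

section ExampleK1

variable {CN RN IN : Type} {A B C : CN} {R : RN} {a : IN}

/-- `R(a,a)` makes `a` both an `∃R.⊤` and an `∃R⁻.⊤`, hence both `A` and `¬A`. -/
theorem exKB17_not_satAssert_role (J : ClassInterp CN RN IN)
    (hT : ∀ ax ∈ (exKB17 CN RN IN A B C R a).tbox, J.satAx ax) :
    ¬ J.satAssert (Assertion.ra R a a) := by
  intro hR
  have hA := hT (.cinc (.ex (.name R) .top) (.atom A)) (by simp [exKB17])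
  have hnA := hT (.cinc (.ex (.inv R) .top) (.neg (.atom A))) (by simp [exKB17])
  have hsucc : J.ind a ∈ J.ext (Concept.ex (Role.name R) Concept.top) := by
    rw [ClassInterp.ext_ex]; exact ⟨J.ind a, hR, trivial⟩
  have hpred : J.ind a ∈ J.ext (Concept.ex (Role.inv R) Concept.top) := by
    rw [ClassInterp.ext_ex]; exact ⟨J.ind a, hR, trivial⟩
  exact hnA hpred (hA hsucc)

theorem exKB17_ofABox_satAx [Nonempty IN] (hBC : B ≠ C) :
    ∀ ax ∈ (exKB17 CN RN IN A B C R a).tbox,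
      (ClassInterp.ofABox ({Assertion.ca B a} : Set (Assertion CN RN IN))).satAx ax := by
  have no_edge : ∀ S x y,
      (x, y) ∉ (ClassInterp.ofABox ({Assertion.ca B a} : Set (Assertion CN RN IN))).rInterp S := by
    rintro (S | S) x y h <;> cases h
  intro ax hax
  simp only [exKB17, Set.mem_insert_iff, Set.mem_singleton_iff] at hax
  rcases hax with rfl | rfl | rfl | rfl <;> intro x hx
  iterate 3
    rw [ClassInterp.ext_ex] at hx
    obtain ⟨y, hy, -⟩ := hx
    exact absurd hy (no_edge _ x y)
  cases hx
  exact absurd rfl hBC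

theorem exKB17_isGreatest_consistent (hBC : B ≠ C) :
    IsGreatest {A' | A' ⊆ (exKB17 CN RN IN A B C R a).abox ∧
      clConsistentS (exKB17 CN RN IN A B C R a).tbox A'} {Assertion.ca B a} := by
  have : Nonempty IN := ⟨a⟩
  refine ⟨⟨by simp [exKB17], clConsistentS_of_ofABox (exKB17_ofABox_satAx hBC)⟩, ?_⟩
  rintro A' ⟨hsub, J, hJT, hJA⟩ φ hφ
  rcases hsub hφ with rfl | hB
  · exact absurd (hJA _ hφ) (exKB17_not_satAssert_role J hJT)
  · exact hB

theorem exKB17_clEntailsAssertS_iff (hBC : B ≠ C) (φ : Assertion CN RN IN) :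
    clEntailsAssertS (exKB17 CN RN IN A B C R a).tbox {Assertion.ca B a} φ ↔
      φ = Assertion.ca B a :=
  have : Nonempty IN := ⟨a⟩
  clEntailsAssertS_iff_mem_of_ofABox (exKB17_ofABox_satAx hBC) φ

theorem exKB17_four_mem_cpos_cneg (I : FourInterp CN RN IN)
    (hI : I.satKB (exKB17 CN RN IN A B C R a)) :
    I.ind a ∈ I.cpos C ∧ I.ind a ∈ I.cneg B := by
  have hR : (I.ind a, I.ind a) ∈ I.rext R := hI.2 (Assertion.ra R a a) (by simp [exKB17])
  have hC : I.ind a ∈ I.cpos C :=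
    hI.1 (.cinc (.ex (.name R) .top) (.atom C)) (by simp [exKB17]) ⟨I.ind a, hR, trivial⟩
  exact ⟨hC, hI.1 (.cinc (.atom C) (.neg (.atom B))) (by simp [exKB17]) hC⟩

def exKB17FourModel (C : CN) : FourInterp CN RN IN where
  Dom := Unit
  dom_nonempty := ⟨()⟩
  cpos _ := Set.univ
  cneg X := {_u | X ≠ C}
  rext _ := Set.univ
  ind _ := ()

theorem exKB17FourModel_satKB (hAC : A ≠ C) (hBC : B ≠ C) :
    (exKB17FourModel C).satKB (exKB17 CN RN IN A B C R a) := by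
  refine ⟨fun ax hax => ?_, fun α _ => ?_⟩
  · simp only [exKB17, Set.mem_insert_iff, Set.mem_singleton_iff] at hax
    rcases hax with rfl | rfl | rfl | rfl
    exacts [fun _ _ => trivial, fun _ _ => hAC, fun _ _ => trivial, fun _ _ => hBC]
  · cases α <;> trivial

end ExampleK1

/-- the repair-based and four-valued semantics disagree on `K₁`. -/
theorem example_K1_incomparability {CN RN IN : Type} (A B C : CN) (R : RN) (a : IN)
    (hAB : A ≠ B) (hAC : A ≠ C) (hBC : B ≠ C) :
    (∀ A' : Set (Assertion CN RN IN),
        IsRepair (exKB17 CN RN IN A B C R a) A' ↔ A' = {Assertion.ca B a}) ∧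
    (∀ Rp : Set (Assertion CN RN IN),
        IsClosedRepair (exKB17 CN RN IN A B C R a) Rp ↔ Rp = {Assertion.ca B a}) ∧
    iarEntailsAssert (exKB17 CN RN IN A B C R a) (Assertion.ca B a) ∧
    ¬ braveEntailsAssert (exKB17 CN RN IN A B C R a) (Assertion.ca C a) ∧
    ¬ carEntailsAssert (exKB17 CN RN IN A B C R a) (Assertion.ca C a) ∧
    fourEntailsT (exKB17 CN RN IN A B C R a) C a ∧
    ¬ fourEntailsT (exKB17 CN RN IN A B C R a) B a ∧
    (∀ I : FourInterp CN RN IN, I.satKB (exKB17 CN RN IN A B C R a) →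
        I.ind a ∈ I.cpos C ∧ I.ind a ∈ I.cneg B) ∧
    (∃ J : FourInterp CN RN IN, J.satKB (exKB17 CN RN IN A B C R a) ∧
        J.ind a ∉ J.cneg C) := by
  have hgreat := exKB17_isGreatest_consistent (A := A) (R := R) (a := a) hBC
  have hentails := exKB17_clEntailsAssertS_iff (A := A) (R := R) (a := a) hBC
  have hrep := isRepair_iff_eq_of_isGreatest hgreat
  have hcstar := cstar_eq_of_isGreatest hgreat fun φ => (hentails φ).1
  have hclosed := isClosedRepair_iff_eq_of_cstar_eq hgreat.1.1 hgreat.1.2 hcstar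
  have not_entails_C : ¬ clEntailsAssertS (exKB17 CN RN IN A B C R a).tbox
      {Assertion.ca B a} (Assertion.ca C a) := fun h =>
    hBC (Assertion.ca.inj ((hentails _).1 h)).1.symm
  have hmodel := exKB17FourModel_satKB (R := R) (a := a) hAC hBC
  have not_cneg_C : (exKB17FourModel C : FourInterp CN RN IN).ind a ∉
      (exKB17FourModel C).cneg C := fun h => h rfl
  refine ⟨hrep, hclosed, (iarEntailsAssert_iff_of_isRepair_iff hrep _).2 ((hentails _).2 rfl),
    not_entails_C ∘ (braveEntailsAssert_iff_of_isRepair_iff hrep _).1,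
    not_entails_C ∘ (carEntailsAssert_iff_of_isClosedRepair_iff hclosed _).1,
    ⟨fun I hI => (exKB17_four_mem_cpos_cneg I hI).1, _, hmodel, trivial, not_cneg_C⟩,
    fun ⟨_, I, hI, _, hB⟩ => hB (exKB17_four_mem_cpos_cneg I hI).2,
    exKB17_four_mem_cpos_cneg, _, hmodel, not_cneg_C⟩
end Para
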